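/- With γ, b, n, t and the Frenet frame as above, let λ₀ ∈ ℝ⁴_2 and suppose h(s₀) = ⟨γ(s₀),λ₀⟩+1 = 0 and h'(s₀) = ⟨t(s₀),λ₀⟩ = 0. Writing λ₀ = ξ γ(s₀) + λ b(s₀) + μ n(s₀) + ν t(s₀) in the pseudo-orthonormal frame and assuming ⟨λ₀,λ₀⟩ = -1, one has ξ = 1, ν = 0, and λ² = μ², so that λ₀ = γ(s₀) + u(b(s₀) ± n(s₀)) for some u ∈ ℝ. -/
import Mathlib


/-- The index-2 pseudo scalar product on ℝ⁴. -/
def pseudo4 (x y : Fin 4 → ℝ) : ℝ :=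
  ∑ i : Fin 4, (if (i : ℕ) < 2 then (-1 : ℝ) else 1) * x i * y i

lemma pseudo4_add_right (x y z : Fin 4 → ℝ) :
    pseudo4 x (y + z) = pseudo4 x y + pseudo4 x z := by
  have h3 : ¬ ((3 : Fin 4) : ℕ) < 2 := by decide
  simp only [pseudo4, Fin.sum_univ_four, Pi.add_apply, if_neg h3]; norm_num; ring

lemma pseudo4_smul_right (c : ℝ) (x y : Fin 4 → ℝ) :
    pseudo4 x (c • y) = c * pseudo4 x y := by
  have h3 : ¬ ((3 : Fin 4) : ℕ) < 2 := by decide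
  simp only [pseudo4, Fin.sum_univ_four, Pi.smul_apply, smul_eq_mul, if_neg h3]; norm_num; ring

lemma pseudo4_comm (x y : Fin 4 → ℝ) : pseudo4 x y = pseudo4 y x := by
  have h3 : ¬ ((3 : Fin 4) : ℕ) < 2 := by decide
  simp only [pseudo4, Fin.sum_univ_four, if_neg h3]; norm_num; ring

/-- Proposition 10.1(1): if λ₀ ∈ AdS³ satisfies h(s₀) = ⟨γ(s₀),λ₀⟩+1 = 0 and
h'(s₀) = ⟨t(s₀),λ₀⟩ = 0, then in the pseudo-orthonormal frame
λ₀ = ξ γ + λ b + μ n + ν t one has ξ = 1, ν = 0 and λ² = μ², so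
λ₀ = γ(s₀) + u (b(s₀) ± n(s₀)) for some u ∈ ℝ. -/
theorem stmt_13 (γ b n t : ℝ → Fin 4 → ℝ) (s₀ : ℝ)
    (hγγ : pseudo4 (γ s₀) (γ s₀) = -1)
    (hbb : pseudo4 (b s₀) (b s₀) = -1)
    (hnn : pseudo4 (n s₀) (n s₀) = 1)
    (htt : pseudo4 (t s₀) (t s₀) = 1)
    (hγb : pseudo4 (γ s₀) (b s₀) = 0)
    (hγn : pseudo4 (γ s₀) (n s₀) = 0)
    (hγt : pseudo4 (γ s₀) (t s₀) = 0)
    (hbn : pseudo4 (b s₀) (n s₀) = 0)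
    (hbt : pseudo4 (b s₀) (t s₀) = 0)
    (hnt : pseudo4 (n s₀) (t s₀) = 0)
    (lam₀ : Fin 4 → ℝ) (ξ lam μ ν : ℝ)
    (hdecomp : lam₀ = ξ • γ s₀ + lam • b s₀ + μ • n s₀ + ν • t s₀)
    (hAdS : pseudo4 lam₀ lam₀ = -1)
    (h0 : pseudo4 (γ s₀) lam₀ + 1 = 0)
    (h1 : pseudo4 (t s₀) lam₀ = 0) :
    ξ = 1 ∧ ν = 0 ∧ lam ^ 2 = μ ^ 2 ∧
    ∃ u : ℝ, lam₀ = γ s₀ + u • (b s₀ + n s₀) ∨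
             lam₀ = γ s₀ + u • (b s₀ - n s₀) := by
  have key : ∀ x : Fin 4 → ℝ, pseudo4 x lam₀ =
      ξ * pseudo4 x (γ s₀) + lam * pseudo4 x (b s₀) + μ * pseudo4 x (n s₀)
        + ν * pseudo4 x (t s₀) := by
    intro x
    rw [hdecomp, pseudo4_add_right, pseudo4_add_right, pseudo4_add_right,
      pseudo4_smul_right, pseudo4_smul_right, pseudo4_smul_right, pseudo4_smul_right]
  have e0 : pseudo4 (γ s₀) lam₀ = -ξ := by
    rw [key]; rw [hγγ, hγb, hγn, hγt]; ring
  have e1 : pseudo4 (t s₀) lam₀ = ν := by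
    rw [key]; rw [pseudo4_comm (t s₀) (γ s₀), hγt, pseudo4_comm (t s₀) (b s₀), hbt,
      pseudo4_comm (t s₀) (n s₀), hnt, htt]; ring
  have eb : pseudo4 (b s₀) lam₀ = -lam := by
    rw [key]; rw [pseudo4_comm (b s₀) (γ s₀), hγb, hbb, hbn, hbt]; ring
  have en : pseudo4 (n s₀) lam₀ = μ := by
    rw [key]; rw [pseudo4_comm (n s₀) (γ s₀), hγn, pseudo4_comm (n s₀) (b s₀), hbn,
      hnn, hnt]; ring
  have hξ : ξ = 1 := by rw [e0] at h0; linarith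
  have hν : ν = 0 := by rw [e1] at h1; linarith
  have eAdS : -ξ ^ 2 - lam ^ 2 + μ ^ 2 + ν ^ 2 = -1 := by
    rw [key, pseudo4_comm lam₀ (γ s₀), e0, pseudo4_comm lam₀ (b s₀), eb,
      pseudo4_comm lam₀ (n s₀), en, pseudo4_comm lam₀ (t s₀), e1] at hAdS
    nlinarith [hAdS]
  have hlm : lam ^ 2 = μ ^ 2 := by rw [hξ, hν] at eAdS; nlinarith
  subst hξ hν
  refine ⟨rfl, rfl, hlm, lam, ?_⟩
  rcases (sq_eq_sq_iff_eq_or_eq_neg (a := μ) (b := lam)).mp hlm.symm with h | h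
  · left; subst h
    rw [hdecomp]; funext i
    simp only [Pi.add_apply, Pi.smul_apply, smul_eq_mul]; ring
  · right; subst h
    rw [hdecomp]; funext i
    simp only [Pi.add_apply, Pi.sub_apply, Pi.smul_apply, smul_eq_mul]; ring
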